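/- The average degree of the Lucas cube Λ_n, divided by n, converges to (5−√5)/5 as n → ∞. -/

import Mathlib

open Finset

/-- Number of positions where two binary strings differ. -/
def diffCount {n : ℕ} (u v : Fin n → Bool) : ℕ :=
  (Finset.univ.filter fun i => u i ≠ v i).card

/-- Fibonacci strings: binary strings with no two consecutive 1's. -/
def FibPred (n : ℕ) (v : Fin n → Bool) : Prop :=
  ∀ i j : Fin n, (j : ℕ) = (i : ℕ) + 1 → ¬(v i = true ∧ v j = true)

instance (n : ℕ) : DecidablePred (FibPred n) := fun v => by
  unfold FibPred; infer_instance

/-- Vertices of the Fibonacci cube: Fibonacci strings of length n. -/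
def FibV (n : ℕ) := {v : Fin n → Bool // FibPred n v}

instance (n : ℕ) : Fintype (FibV n) := Subtype.fintype _
instance (n : ℕ) : DecidableEq (FibV n) := Subtype.instDecidableEq

/-- The Fibonacci cube Γ_n: Fibonacci strings adjacent iff they differ in exactly one position. -/
def fibCube (n : ℕ) : SimpleGraph (FibV n) where
  Adj u v := diffCount u.1 v.1 = 1
  symm := by
    constructor
    intro u v h
    have he : (Finset.univ.filter fun i => v.1 i ≠ u.1 i)
        = (Finset.univ.filter fun i => u.1 i ≠ v.1 i) := by
      apply Finset.filter_congr; intro i _; exact ne_comm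
    simpa [diffCount, he] using h
  loopless := by constructor; intro u h; simp [diffCount] at h

instance (n : ℕ) : DecidableRel (fibCube n).Adj := fun u v => Nat.decEq _ _

/-- Lucas strings: binary strings with no two cyclically consecutive 1's. -/
def LucasPred (n : ℕ) (v : Fin n → Bool) : Prop :=
  ∀ i j : Fin n, (j : ℕ) = ((i : ℕ) + 1) % n → ¬(v i = true ∧ v j = true)

instance (n : ℕ) : DecidablePred (LucasPred n) := fun v => by
  unfold LucasPred; infer_instance

/-- Vertices of the Lucas cube: Lucas strings of length n. -/
def LucasV (n : ℕ) := {v : Fin n → Bool // LucasPred n v}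

instance (n : ℕ) : Fintype (LucasV n) := Subtype.fintype _
instance (n : ℕ) : DecidableEq (LucasV n) := Subtype.instDecidableEq

/-- The Lucas cube Λ_n: Lucas strings adjacent iff they differ in exactly one position. -/
def lucasCube (n : ℕ) : SimpleGraph (LucasV n) where
  Adj u v := diffCount u.1 v.1 = 1
  symm := by
    constructor
    intro u v h
    have he : (Finset.univ.filter fun i => v.1 i ≠ u.1 i)
        = (Finset.univ.filter fun i => u.1 i ≠ v.1 i) := by
      apply Finset.filter_congr; intro i _; exact ne_comm
    simpa [diffCount, he] using h
  loopless := by constructor; intro u h; simp [diffCount] at h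

instance (n : ℕ) : DecidableRel (lucasCube n).Adj := fun u v => Nat.decEq _ _

/-!
The degree of a Lucas string `v` is the number of positions whose flip keeps it a Lucas string.
Exchanging the sums, position `i` contributes twice the number of Lucas strings with a `1` at `i`:
a `1` can always be flipped to `0`, and flipping at `i` pairs the remaining neighbours with those
strings. By rotation invariance this number does not depend on `i`, so `2|E(Λ_n)| = 2n F_{n-1}`.
Peeling off the first and last bits gives `|Λ_n| = F_{n+1} + F_{n-1}`, hence the average degree
divided by `n` is `2F_{n-1} / (F_{n+1} + F_{n-1}) → 2 / (φ² + 1) = (5 - √5) / 5`.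
-/

section Counting

variable {n : ℕ}

lemma card_filter_eq_insertNth_false_add_insertNth_true (p : Fin (n + 1))
    (P : (Fin (n + 1) → Bool) → Prop) [DecidablePred P] :
    #{v | P v} = #{w | P (p.insertNth false w)} + #{w | P (p.insertNth true w)} := by
  simp only [card_filter]
  rw [← (Fin.insertNthEquiv (fun _ => Bool) p).sum_comp, Fintype.sum_prod_type, Fintype.sum_bool,
    add_comm]
  rfl

lemma card_filter_and_apply_eq (p : Fin (n + 1)) (b : Bool)
    (P : (Fin (n + 1) → Bool) → Prop) [DecidablePred P] :
    #{v | P v ∧ v p = b} = #{w | P (p.insertNth b w)} := by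
  rw [card_filter_eq_insertNth_false_add_insertNth_true p]
  cases b <;> simp

lemma fibPred_cons_false (w : Fin n → Bool) :
    FibPred (n + 1) (Fin.cons false w) ↔ FibPred n w := by
  simp [FibPred, Fin.forall_fin_succ]

lemma fibPred_cons (b : Bool) (w : Fin (n + 1) → Bool) :
    FibPred (n + 2) (Fin.cons b w) ↔ FibPred (n + 1) w ∧ (b = true → w 0 = false) := by
  simp [FibPred, Fin.forall_fin_succ, and_comm]

lemma fibPred_snoc_false (w : Fin n → Bool) :
    FibPred (n + 1) (Fin.snoc w false) ↔ FibPred n w := by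
  simp [FibPred, Fin.forall_fin_succ']

lemma card_fibPred : ∀ n, #{v | FibPred n v} = Nat.fib (n + 2)
  | 0 => by decide
  | 1 => by decide
  | n + 2 => by
    have head_false : #{w | FibPred (n + 1) w ∧ w 0 = false} = #{u | FibPred n u} := by
      simp [card_filter_and_apply_eq, fibPred_cons_false]
    rw [card_filter_eq_insertNth_false_add_insertNth_true 0]
    simp only [Fin.insertNth_zero', fibPred_cons, Bool.false_eq_true, false_implies, and_true,
      forall_const, head_false, card_fibPred (n + 1), card_fibPred n, Nat.fib_add_two (n := n + 2)]
    ring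

lemma card_fibPred_and_ends_false (n : ℕ) :
    #{w : Fin (n + 2) → Bool | (FibPred (n + 2) w ∧ w 0 = false) ∧ w (Fin.last (n + 1)) = false}
      = Nat.fib (n + 2) := by
  have reorder (w : Fin (n + 2) → Bool) : ((FibPred (n + 2) w ∧ w 0 = false) ∧
      w (Fin.last (n + 1)) = false) ↔ (FibPred (n + 2) w ∧ w (Fin.last (n + 1)) = false) ∧
      w 0 = false := and_right_comm
  simp [reorder, card_filter_and_apply_eq, Fin.insertNth_zero', fibPred_cons_false, Fin.cons_last,
    Fin.insertNth_last', fibPred_snoc_false, card_fibPred]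

lemma lucasPred_succ_iff (v : Fin (n + 1) → Bool) :
    LucasPred (n + 1) v ↔ FibPred (n + 1) v ∧ ¬(v (Fin.last n) = true ∧ v 0 = true) := by
  refine ⟨fun h => ⟨fun i j hj => h i j ?_, h _ _ (by simp)⟩, fun ⟨hfib, hwrap⟩ i j hj => ?_⟩
  · rw [hj, Nat.mod_eq_of_lt (hj ▸ j.isLt)]
  · by_cases hi : (i : ℕ) + 1 < n + 1
    · exact hfib i j (by rwa [Nat.mod_eq_of_lt hi] at hj)
    · obtain rfl : i = Fin.last n := Fin.ext (by rw [Fin.val_last]; omega)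
      obtain rfl : j = 0 := Fin.ext (by simpa using hj)
      exact hwrap

lemma card_lucasPred_cons_false (n : ℕ) :
    #{w : Fin n → Bool | LucasPred (n + 1) (Fin.cons false w)} = Nat.fib (n + 2) := by
  simp [lucasPred_succ_iff, fibPred_cons_false, card_fibPred]

lemma card_lucasPred_cons_true (n : ℕ) :
    #{w : Fin (n + 2) → Bool | LucasPred (n + 3) (Fin.cons true w)} = Nat.fib (n + 2) := by
  simp [lucasPred_succ_iff, fibPred_cons, Fin.cons_last, card_fibPred_and_ends_false]

lemma card_lucasV (n : ℕ) : Fintype.card (LucasV (n + 3)) = Nat.fib (n + 4) + Nat.fib (n + 2) := by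
  rw [show Fintype.card (LucasV (n + 3)) = #{v | LucasPred (n + 3) v} from Fintype.card_subtype _,
    card_filter_eq_insertNth_false_add_insertNth_true 0]
  simp only [Fin.insertNth_zero', card_lucasPred_cons_false, card_lucasPred_cons_true]

end Counting

section Degrees

variable {n : ℕ}

def flipAt (i : Fin n) (v : Fin n → Bool) : Fin n → Bool := Function.update v i (!v i)

@[simp] lemma flipAt_apply_self (i : Fin n) (v : Fin n → Bool) : flipAt i v i = !v i :=
  Function.update_self ..

lemma flipAt_apply_of_ne {i j : Fin n} (h : j ≠ i) (v : Fin n → Bool) : flipAt i v j = v j :=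
  Function.update_of_ne h ..

lemma flipAt_involutive (i : Fin n) : Function.Involutive (flipAt i) := fun v => by
  ext j
  by_cases h : j = i
  · subst h; simp
  · simp [flipAt_apply_of_ne h]

lemma flipAt_le {v : Fin n → Bool} {i : Fin n} (hi : v i = true) : flipAt i v ≤ v := fun j => by
  by_cases h : j = i
  · subst h; simp [hi]
  · simp [flipAt_apply_of_ne h]

lemma flipAt_left_injective (u : Fin n → Bool) : Function.Injective (flipAt · u) := by
  intro i j hij
  by_contra h
  simpa [flipAt_apply_of_ne h] using congrFun hij i

lemma filter_ne_flipAt (i : Fin n) (u : Fin n → Bool) :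
    ({j | u j ≠ flipAt i u j} : Finset (Fin n)) = {i} := by
  ext j
  by_cases h : j = i
  · subst h; simp
  · simp [flipAt_apply_of_ne h, h]

lemma diffCount_eq_one_iff {u v : Fin n → Bool} : diffCount u v = 1 ↔ ∃ i, v = flipAt i u := by
  refine ⟨fun h => ?_, fun ⟨i, hi⟩ => by rw [hi, diffCount, filter_ne_flipAt, card_singleton]⟩
  obtain ⟨i, hi⟩ := card_eq_one.mp h
  refine ⟨i, funext fun j => ?_⟩
  have hj : u j ≠ v j ↔ j = i := by simpa using congrArg (j ∈ ·) hi
  by_cases h : j = i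
  · subst h
    rw [flipAt_apply_self]
    exact Bool.eq_not.mpr (hj.mpr rfl).symm
  · simpa [flipAt_apply_of_ne h, h, eq_comm] using hj

lemma degree_lucasCube (u : LucasV n) :
    (lucasCube n).degree u = #{i | LucasPred n (flipAt i u.1)} := by
  rw [← SimpleGraph.card_neighborFinset_eq_degree]
  symm
  refine card_bij (fun i hi => ⟨flipAt i u.1, (mem_filter.mp hi).2⟩) (fun i _ => ?_)
    (fun i _ j _ h => flipAt_left_injective u.1 (congrArg Subtype.val h)) (fun v hv => ?_)
  · exact (SimpleGraph.mem_neighborFinset _ _ _).mpr (diffCount_eq_one_iff.mpr ⟨i, rfl⟩)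
  · obtain ⟨i, hi⟩ := diffCount_eq_one_iff.mp ((SimpleGraph.mem_neighborFinset _ _ _).mp hv)
    exact ⟨i, by simpa [← hi] using v.2, Subtype.ext hi.symm⟩

lemma LucasPred.anti {v w : Fin n → Bool} (hwv : w ≤ v) (hv : LucasPred n v) : LucasPred n w :=
  fun i j hij h => hv i j hij ⟨hwv i h.1, hwv j h.2⟩

lemma card_lucasPred_and_lucasPred_flipAt (i : Fin n) :
    #{v | LucasPred n v ∧ LucasPred n (flipAt i v)} = 2 * #{v | LucasPred n v ∧ v i = true} := by
  rw [← card_filter_add_card_filter_not (fun v => v i = true), filter_filter, filter_filter,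
    two_mul]
  congr 1
  · refine congrArg card (filter_congr fun v _ => ?_)
    exact ⟨fun ⟨⟨hv, _⟩, hi⟩ => ⟨hv, hi⟩, fun ⟨hv, hi⟩ => ⟨⟨hv, hv.anti (flipAt_le hi)⟩, hi⟩⟩
  · refine card_nbij' (flipAt i) (flipAt i) (fun v hv => ?_) (fun v hv => ?_)
      (fun v _ => flipAt_involutive i v) (fun v _ => flipAt_involutive i v)
    · simp only [coe_filter, mem_univ, true_and, Set.mem_ofPred_eq] at hv ⊢
      simpa [hv.2] using hv.1.2
    · simp only [coe_filter, mem_univ, true_and, Set.mem_ofPred_eq] at hv ⊢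
      refine ⟨⟨hv.1.anti (flipAt_le hv.2), ?_⟩, by simp [hv.2]⟩
      rw [flipAt_involutive]
      exact hv.1

lemma lucasPred_iff_forall_add_one [NeZero n] (v : Fin n → Bool) :
    LucasPred n v ↔ ∀ i, ¬(v i = true ∧ v (i + 1) = true) := by
  refine ⟨fun h i => h i (i + 1) (by simp [Fin.val_add]), fun h i j hj => ?_⟩
  obtain rfl : j = i + 1 := Fin.ext (by simp [Fin.val_add, hj])
  exact h i

lemma LucasPred.comp_add_right [NeZero n] {v : Fin n → Bool} (hv : LucasPred n v) (c : Fin n) :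
    LucasPred n (fun j => v (j + c)) := by
  rw [lucasPred_iff_forall_add_one] at hv ⊢
  intro i
  simpa [add_right_comm] using hv (i + c)

lemma card_lucasPred_and_apply_eq_true [NeZero n] (i : Fin n) :
    #{v | LucasPred n v ∧ v i = true} = #{v | LucasPred n v ∧ v 0 = true} := by
  refine card_nbij' (fun v j => v (j + i)) (fun v j => v (j - i)) (fun v hv => ?_)
    (fun v hv => ?_) (fun v _ => by simp) (fun v _ => by simp)
  · simp only [coe_filter, mem_univ, true_and, Set.mem_ofPred_eq] at hv ⊢
    exact ⟨hv.1.comp_add_right i, by simpa using hv.2⟩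
  · simp only [coe_filter, mem_univ, true_and, Set.mem_ofPred_eq] at hv ⊢
    exact ⟨by simpa [← sub_eq_add_neg] using hv.1.comp_add_right (-i), by simpa using hv.2⟩

lemma sum_degree_lucasCube [NeZero n] :
    ∑ u, (lucasCube n).degree u = n * (2 * #{v | LucasPred n v ∧ v 0 = true}) :=
  calc ∑ u, (lucasCube n).degree u
      = ∑ u : LucasV n, #{i | LucasPred n (flipAt i u.1)} := by
        simp only [degree_lucasCube]
    _ = ∑ v ∈ {v | LucasPred n v}, #{i | LucasPred n (flipAt i v)} := by
        rw [sum_subtype (p := LucasPred n) _ (by simp)]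
        rfl
    _ = ∑ i, #{v | LucasPred n v ∧ LucasPred n (flipAt i v)} := by
        simp only [card_filter, ← filter_filter]
        exact sum_comm
    _ = n * (2 * #{v | LucasPred n v ∧ v 0 = true}) := by
        simp [card_lucasPred_and_lucasPred_flipAt, card_lucasPred_and_apply_eq_true]

end Degrees

section Limits

open Filter Topology Real
open scoped goldenRatio

lemma tendsto_fib_add_two_div_fib :
    Tendsto (fun k => (Nat.fib (k + 2) / Nat.fib k : ℝ)) atTop (𝓝 (φ ^ 2)) := by
  have h := (tendsto_fib_succ_div_fib_atTop.comp (tendsto_add_atTop_nat 1)).mul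
    tendsto_fib_succ_div_fib_atTop
  rw [← sq] at h
  refine h.congr fun k => ?_
  have : (Nat.fib (k + 1) : ℝ) ≠ 0 := by exact_mod_cast (Nat.fib_pos.mpr k.succ_pos).ne'
  simp [div_mul_div_cancel₀ this]

lemma tendsto_two_mul_fib_div_fib_add_fib :
    Tendsto (fun k => 2 * Nat.fib (k + 2) / (Nat.fib (k + 4) + Nat.fib (k + 2) : ℝ)) atTop
      (𝓝 ((5 - √5) / 5)) := by
  have h := (tendsto_const_nhds (x := (2 : ℝ))).div
    ((tendsto_fib_add_two_div_fib.comp (tendsto_add_atTop_nat 2)).add_const 1) (by positivity)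
  have hlim : 2 / (φ ^ 2 + 1) = (5 - √5) / 5 := by
    rw [goldenRatio_sq, goldenRatio, div_eq_div_iff (by positivity) (by norm_num)]
    nlinarith [Real.sq_sqrt (show (0 : ℝ) ≤ 5 by norm_num)]
  rw [hlim] at h
  refine h.congr fun k => ?_
  have : (Nat.fib (k + 2) : ℝ) ≠ 0 := by exact_mod_cast (Nat.fib_pos.mpr (by omega)).ne'
  simp only [Pi.div_apply, Function.comp_apply]
  field_simp

end Limits

/-- The average degree of Λ_n, divided by n, converges to (5-√5)/5. -/
theorem avg_deg_lucasCube_tendsto :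
    Filter.Tendsto
      (fun n : ℕ =>
        ((∑ u : LucasV n, (lucasCube n).degree u : ℕ) : ℝ) / (Fintype.card (LucasV n)) / n)
      Filter.atTop (nhds ((5 - Real.sqrt 5) / 5)) := by
  rw [← Filter.tendsto_add_atTop_iff_nat 3]
  refine tendsto_two_mul_fib_div_fib_add_fib.congr fun m => ?_
  simp only [sum_degree_lucasCube, card_filter_and_apply_eq, Fin.insertNth_zero',
    card_lucasPred_cons_true, card_lucasV]
  push_cast
  field_simp
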